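/- For every n ≥ 1, the discriminant of the matrix ring Mₙ(ℤ), a ring of rank n², equals (−1)^{n(n−1)/2} · n^{n²}. -/

import Mathlib

/-!
Left multiplication by `x` acts on each of the `n` columns of a matrix as `x` does, so its
trace is `n · tr x`. For the matrix units this gives `Tr(L_{E_ab E_cd}) = n · [b = c] [a = d]`:
the Gram matrix in the standard basis is `n` times the permutation matrix of the swap
`(a, b) ↦ (b, a)`, an involution of `Fin n × Fin n` with `n` fixed points, hence of sign
`(-1)^((n² - n)/2)`. Any other ℤ-basis changes the Gram matrix to `Pᵀ G P` with `det P = ±1`.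
-/

open Matrix

/-- The Gram matrix of a ring of rank `m` with respect to a ℤ-basis `b`:
its `(i,j)` entry is the trace of the matrix of left multiplication by `b i * b j`. -/
noncomputable def gramMatrix {m : ℕ} {A : Type} [Ring A] (b : Module.Basis (Fin m) ℤ A) :
    Matrix (Fin m) (Fin m) ℤ :=
  Matrix.of fun i j => (Algebra.leftMulMatrix b (b i * b j)).trace

/-- The discriminant of a ring of rank `m` with respect to a ℤ-basis `b`. -/
noncomputable def disc {m : ℕ} {A : Type} [Ring A] (b : Module.Basis (Fin m) ℤ A) : ℤ :=
  (gramMatrix b).det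

open LinearMap (BilinForm)

section TraceForm

variable (R A : Type*) [CommRing R] [Ring A] [Algebra R A]

-- `Algebra.traceForm` is only available for commutative `A`.
noncomputable def leftMulTraceForm : BilinForm R A :=
  (LinearMap.mul R A).compr₂ ((LinearMap.trace R A).comp (Algebra.lmul R A).toLinearMap)

variable {R A}

theorem leftMulTraceForm_apply (x y : A) :
    leftMulTraceForm R A x y = LinearMap.trace R A (Algebra.lmul R A (x * y)) := rfl

end TraceForm

theorem gramMatrix_eq_toMatrix {m : ℕ} {A : Type} [Ring A] (b : Module.Basis (Fin m) ℤ A) :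
    gramMatrix b = LinearMap.BilinForm.toMatrix b (leftMulTraceForm ℤ A) := by
  ext i j
  rw [LinearMap.BilinForm.toMatrix_apply, leftMulTraceForm_apply,
    LinearMap.trace_eq_matrix_trace ℤ b]
  rfl

namespace LinearMap.BilinForm

theorem det_toMatrix_eq_det_toMatrix {M ι κ : Type*} [AddCommGroup M]
    [Fintype ι] [DecidableEq ι] [Fintype κ] [DecidableEq κ] (B : BilinForm ℤ M)
    (b : Module.Basis ι ℤ M) (c : Module.Basis κ ℤ M) :
    (toMatrix b B).det = (toMatrix c B).det := by
  set e := c.indexEquiv b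
  have h_reindex : toMatrix (c.reindex e) B = (toMatrix c B).submatrix e.symm e.symm := by
    ext i j
    simp only [toMatrix_apply, submatrix_apply, Module.Basis.reindex_apply]
  have h_unit : (b.toMatrix (c.reindex e)).det * (b.toMatrix (c.reindex e)).det = 1 :=
    Int.isUnit_mul_self (by simpa [Module.Basis.det_apply] using b.isUnit_det (c.reindex e))
  rw [← det_submatrix_equiv_self e.symm, ← h_reindex,
    ← toMatrix_mul_basis_toMatrix b (c.reindex e), det_mul, det_mul, det_transpose]
  linear_combination -(toMatrix b B).det * h_unit

end LinearMap.BilinForm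

theorem disc_eq_det_toMatrix {m : ℕ} {A ι : Type} [Ring A] [Fintype ι] [DecidableEq ι]
    (b : Module.Basis (Fin m) ℤ A) (c : Module.Basis ι ℤ A) :
    disc b = (LinearMap.BilinForm.toMatrix c (leftMulTraceForm ℤ A)).det := by
  rw [disc, gramMatrix_eq_toMatrix, BilinForm.det_toMatrix_eq_det_toMatrix _ b c]

theorem Equiv.Perm.sign_prodComm_self (α : Type*) [Fintype α] [DecidableEq α] :
    sign (Equiv.prodComm α α : Perm (α × α)) =
      (-1) ^ (Fintype.card α * (Fintype.card α - 1) / 2) := by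
  have h_fixed : Fintype.card (Function.fixedPoints (Equiv.prodComm α α : Perm (α × α)))
      = Fintype.card α :=
    Fintype.card_congr
      { toFun := fun p => p.1.1
        invFun := fun a => ⟨(a, a), rfl⟩
        left_inv := fun ⟨p, hp⟩ => Subtype.ext (Prod.ext rfl (congrArg Prod.fst hp).symm)
        right_inv := fun _ => rfl }
  rw [sign_of_pow_two_eq_one (by ext <;> rfl), Fintype.card_prod, h_fixed, Nat.mul_sub_one]

namespace Matrix

theorem stdBasis_repr_apply {R m n : Type*} [Semiring R] [Fintype m] [Finite n]
    (M : Matrix m n R) (i : m) (j : n) : (stdBasis R m n).repr M (i, j) = M i j := by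
  simp [stdBasis]

variable {R : Type*} [CommRing R] {n : Type*} [Fintype n] [DecidableEq n]

theorem trace_lmul (x : Matrix n n R) :
    LinearMap.trace R _ (Algebra.lmul R (Matrix n n R) x) = Fintype.card n • x.trace := by
  rw [LinearMap.trace_eq_matrix_trace R (stdBasis R n n), ← Algebra.leftMulMatrix_apply]
  have h_diag (p : n × n) : Algebra.leftMulMatrix (stdBasis R n n) x p p = x p.1 p.1 := by
    rw [Algebra.leftMulMatrix_eq_repr_mul, stdBasis_eq_single, stdBasis_repr_apply,
      mul_single_apply_same, mul_one]
  simp only [trace, diag_apply, h_diag, Fintype.sum_prod_type, Finset.sum_const, Finset.card_univ,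
    Finset.smul_sum]

theorem leftMulTraceForm_toMatrix_stdBasis :
    LinearMap.BilinForm.toMatrix (stdBasis R n n) (leftMulTraceForm R (Matrix n n R)) =
      (Fintype.card n : R) •
        Equiv.Perm.permMatrix R (Equiv.prodComm n n : Equiv.Perm (n × n)) := by
  ext ⟨a, b⟩ ⟨c, d⟩
  rw [LinearMap.BilinForm.toMatrix_apply, leftMulTraceForm_apply, trace_lmul, stdBasis_eq_single,
    stdBasis_eq_single, trace_single_mul]
  simp [Equiv.Perm.permMatrix, PEquiv.toMatrix_apply, single_apply, Prod.ext_iff,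
    eq_comm (a := c), eq_comm (a := d)]

end Matrix

theorem disc_matrixRing_general (n : ℕ)
    (b : Module.Basis (Fin (n ^ 2)) ℤ (Matrix (Fin n) (Fin n) ℤ)) :
    disc b = (-1) ^ (n * (n - 1) / 2) * (n : ℤ) ^ (n ^ 2) := by
  rw [disc_eq_det_toMatrix b (stdBasis ℤ (Fin n) (Fin n))]
  -- `disc` makes `Mₙ(ℤ)` a ℤ-algebra through `algebraInt`, the lemma through
  -- `Matrix.instAlgebra`: definitionally but not syntactically equal.
  erw [leftMulTraceForm_toMatrix_stdBasis]
  rw [Matrix.det_smul, det_permutation, Equiv.Perm.sign_prodComm_self]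
  simp only [Fintype.card_prod, Fintype.card_fin, Units.val_pow_eq_pow_val, Units.val_neg,
    Units.val_one, Int.cast_id]
  ring

/-- For `n ≥ 1`, the discriminant of the matrix ring `Mₙ(ℤ)`, a ring of rank `n²`
(computed in any ℤ-basis, since the discriminant is basis-independent), equals
`(−1)^{n(n−1)/2} · n^{n²}`. -/
theorem disc_matrixRing (n : ℕ) (hn : 1 ≤ n)
    (b : Module.Basis (Fin (n ^ 2)) ℤ (Matrix (Fin n) (Fin n) ℤ)) :
    disc b = (-1) ^ (n * (n - 1) / 2) * (n : ℤ) ^ (n ^ 2) :=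
  disc_matrixRing_general n b
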